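/- Let r ≥ 3 and 1 ≤ k ≤ r, and let K be a complete r-uniform r-partite hypergraph with a spanning k-coloring of its edges. Then the vertex set of K is covered by a single monochromatic component. -/

import Mathlib

open Classical

variable {V : Type*}

/-- `e` is an edge of the complete `r`-uniform `r`-partite hypergraph with
partition `part`: it meets every class in exactly one vertex. -/
def IsPartiteEdge {r : ℕ} (part : V → Fin r) (e : Finset V) : Prop :=
  ∀ i : Fin r, (e.filter fun v => part v = i).card = 1

/-- `e` is an edge of the complete `r`-uniform `(r,ℓ)`-partite hypergraph:
an `r`-set meeting every class in at most `ℓ` vertices. -/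
def IsRLEdge {r : ℕ} (part : V → Fin r) (ℓ : ℕ) (e : Finset V) : Prop :=
  e.card = r ∧ ∀ i : Fin r, (e.filter fun v => part v = i).card ≤ ℓ

/-- An edge is friendly if it meets at most one class in exactly `ℓ` vertices. -/
def Friendly {r : ℕ} (part : V → Fin r) (ℓ : ℕ) (e : Finset V) : Prop :=
  (Finset.univ.filter fun i : Fin r => (e.filter fun v => part v = i).card = ℓ).card ≤ 1

/-- `u` and `v` lie in the same monochromatic component of color `c` of the
hypergraph with edge predicate `E` and edge coloring `χ`. -/
def MonoConn {k : ℕ} (E : Finset V → Prop) (χ : Finset V → Fin k) (c : Fin k)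
    (u v : V) : Prop :=
  Relation.ReflTransGen (fun a b => ∃ e : Finset V, E e ∧ χ e = c ∧ a ∈ e ∧ b ∈ e) u v

/-- The coloring `χ` is spanning: every vertex is incident with an edge of every color. -/
def Spanning {k : ℕ} (E : Finset V → Prop) (χ : Finset V → Fin k) : Prop :=
  ∀ v : V, ∀ c : Fin k, ∃ e : Finset V, E e ∧ χ e = c ∧ v ∈ e

/-- The vertex set can be covered by at most `m` monochromatic components. -/
def CoversBy {k : ℕ} (E : Finset V → Prop) (χ : Finset V → Fin k) (m : ℕ) : Prop :=
  ∃ f : Fin m → Fin k × V, ∀ v : V, ∃ i : Fin m, MonoConn E χ (f i).1 (f i).2 v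

/-- Hamming distance of the component vectors of two vertices: the number of
colors `c` for which they lie in different monochromatic components of color `c`. -/
noncomputable def HamDist {k : ℕ} (E : Finset V → Prop) (χ : Finset V → Fin k)
    (v w : V) : ℕ :=
  (Finset.univ.filter fun c : Fin k => ¬ MonoConn E χ c v w).card

/-!
Suppose no monochromatic component is spanning. A component of color `c` contains an edge of
color `c`, so it meets every class; hence every class has a vertex outside it. A set meeting each
class at most once extends to an edge, so it lies inside a single monochromatic component. It
therefore suffices to find a vertex `u` and such a set which, for every color `c`, contains a vertex
outside the `c`-component of `u`. For `k < r` this is `u` plus one fresh class per color. For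
`k = r` two colors must share a witness: one needs `u`, `w` in different classes lying in different
components for two colors at once, and then the remaining `r - 2` colors get the remaining classes.
-/

namespace MonoConn

variable {k : ℕ} {E : Finset V → Prop} {χ : Finset V → Fin k} {c : Fin k} {a b x : V}

lemma of_mem {e : Finset V} (he : E e) (hc : χ e = c) (ha : a ∈ e) (hb : b ∈ e) :
    MonoConn E χ c a b :=
  .single ⟨e, he, hc, ha, hb⟩

lemma trans (h₁ : MonoConn E χ c a b) (h₂ : MonoConn E χ c b x) : MonoConn E χ c a x :=
  Relation.ReflTransGen.trans h₁ h₂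

lemma symm (h : MonoConn E χ c a b) : MonoConn E χ c b a := by
  induction h with
  | refl => exact .refl
  | tail _ hstep ih =>
    obtain ⟨e, he, hc, hy, hz⟩ := hstep
    exact (of_mem he hc hz hy).trans ih

end MonoConn

section Partite

open Finset

variable {r k : ℕ} {part : V → Fin r}

lemma isPartiteEdge_image {w : Fin r → V} (hw : ∀ i, part (w i) = i) :
    IsPartiteEdge part (univ.image w) := by
  intro i
  rw [card_eq_one]
  refine ⟨w i, ?_⟩
  ext v
  simp only [mem_filter, mem_image, mem_univ, true_and, mem_singleton]
  constructor
  · rintro ⟨⟨j, rfl⟩, rfl⟩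
    rw [hw]
  · rintro rfl
    exact ⟨⟨i, rfl⟩, hw i⟩

lemma exists_isPartiteEdge_superset (hne : ∀ i : Fin r, ∃ v, part v = i) {S : Finset V}
    (hS : Set.InjOn part S) : ∃ e, IsPartiteEdge part e ∧ S ⊆ e := by
  let w : Fin r → V := fun i => if h : ∃ v ∈ S, part v = i then h.choose else (hne i).choose
  have hw : ∀ i, part (w i) = i := fun i => by
    by_cases h : ∃ v ∈ S, part v = i
    · simp only [w, dif_pos h]; exact h.choose_spec.2
    · simp only [w, dif_neg h]; exact (hne i).choose_spec
  refine ⟨univ.image w, isPartiteEdge_image hw, fun v hv => mem_image.2 ⟨part v, mem_univ _, ?_⟩⟩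
  have h : ∃ u ∈ S, part u = part v := ⟨v, hv, rfl⟩
  simp only [w, dif_pos h]
  exact hS h.choose_spec.1 hv h.choose_spec.2

lemma exists_monoConn_of_injOn (hne : ∀ i : Fin r, ∃ v, part v = i) (χ : Finset V → Fin k)
    {S : Finset V} (hS : Set.InjOn part S) :
    ∃ c, ∀ a ∈ S, ∀ b ∈ S, MonoConn (IsPartiteEdge part) χ c a b := by
  obtain ⟨e, he, hSe⟩ := exists_isPartiteEdge_superset hne hS
  exact ⟨χ e, fun a ha b hb => .of_mem he rfl (hSe ha) (hSe hb)⟩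

end Partite

section Components

open Finset

variable {r k : ℕ} {part : V → Fin r} {χ : Finset V → Fin k}

lemma Spanning.exists_monoConn (hs : Spanning (IsPartiteEdge part) χ) (u : V) (c : Fin k)
    (j : Fin r) : ∃ z, part z = j ∧ MonoConn (IsPartiteEdge part) χ c u z := by
  obtain ⟨e, he, hc, hu⟩ := hs u c
  obtain ⟨z, hz⟩ := card_pos.1 (he j ▸ Nat.one_pos)
  rw [mem_filter] at hz
  exact ⟨z, hz.2, .of_mem he hc hu hz.1⟩

lemma Spanning.exists_not_monoConn (hs : Spanning (IsPartiteEdge part) χ)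
    (hcov : ∀ c w, ∃ v, ¬ MonoConn (IsPartiteEdge part) χ c w v) (u : V) (c : Fin k)
    (j : Fin r) : ∃ z, part z = j ∧ ¬ MonoConn (IsPartiteEdge part) χ c u z := by
  obtain ⟨y, hy⟩ := hcov c u
  obtain ⟨z, hz, hyz⟩ := hs.exists_monoConn y c j
  exact ⟨z, hz, fun huz => hy (huz.trans hyz.symm)⟩

variable {E : Finset V → Prop}

lemma exists_injOn_superset_not_monoConn {u : V}
    (hmiss : ∀ (c : Fin k) (j : Fin r), ∃ z, part z = j ∧ ¬ MonoConn E χ c u z)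
    (T : Finset (Fin k)) {S : Finset V} (hS : Set.InjOn part S) (hcard : #S + #T ≤ r) :
    ∃ S' ⊇ S, Set.InjOn part S' ∧ ∀ c ∈ T, ∃ z ∈ S', ¬ MonoConn E χ c u z := by
  induction T using Finset.induction_on generalizing S with
  | empty => exact ⟨S, subset_rfl, hS, by simp⟩
  | insert c T hcT ih =>
    rw [card_insert_of_notMem hcT] at hcard
    obtain ⟨j, -, hj⟩ : ∃ j ∈ univ, j ∉ S.image part :=
      exists_mem_notMem_of_card_lt_card <| by
        rw [card_univ, Fintype.card_fin]
        exact card_image_le.trans_lt (by omega)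
    obtain ⟨z, rfl, hz⟩ := hmiss c j
    have hzS : z ∉ S := fun h => hj (mem_image_of_mem part h)
    obtain ⟨S', hS', hinj, hsep⟩ := ih (S := insert z S)
      (by
        rw [coe_insert, Set.injOn_insert (by simpa using hzS)]
        exact ⟨hS, by simpa using hj⟩)
      (by rw [card_insert_of_notMem hzS]; omega)
    refine ⟨S', (subset_insert _ _).trans hS', hinj, fun d hd => ?_⟩
    rcases mem_insert.1 hd with rfl | hd
    · exact ⟨z, hS' (mem_insert_self _ _), hz⟩
    · exact hsep d hd

/- If separation in one color forced connection in all others, then `z`, `z'`, taken outside the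
`c₀`- and `c₁`-components of `v`, would be `c₀`-separated, hence `v`, `z`, `z'` all `c₁`-connected. -/
lemma exists_two_colors_not_monoConn (hr : 3 ≤ r)
    (hmiss : ∀ (u : V) (c : Fin k) (j : Fin r), ∃ z, part z = j ∧ ¬ MonoConn E χ c u z)
    (v : V) {c₀ c₁ : Fin k} (hc : c₀ ≠ c₁) :
    ∃ u w c c', part u ≠ part w ∧ c ≠ c' ∧ ¬ MonoConn E χ c u w ∧ ¬ MonoConn E χ c' u w := by
  by_contra! h
  obtain ⟨j, hj, j', hj', hjj'⟩ : ∃ j ∈ univ.erase (part v), ∃ j' ∈ univ.erase (part v), j ≠ j' :=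
    one_lt_card.1 (by rw [card_erase_of_mem (mem_univ _), card_univ, Fintype.card_fin]; omega)
  obtain ⟨z, rfl, hvz⟩ := hmiss v c₀ j
  obtain ⟨z', rfl, hvz'⟩ := hmiss v c₁ j'
  have hvz'₀ : MonoConn E χ c₀ v z' := h v z' c₁ c₀ (ne_of_mem_erase hj').symm hc.symm hvz'
  have hvz₁ : MonoConn E χ c₁ v z := h v z c₀ c₁ (ne_of_mem_erase hj).symm hc hvz
  have hzz'₁ : MonoConn E χ c₁ z z' :=
    h z z' c₀ c₁ hjj' hc fun hzz' => hvz (hvz'₀.trans hzz'.symm)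
  exact hvz' (hvz₁.trans hzz'₁)

lemma exists_injOn_not_monoConn (hr : 3 ≤ r) (hkr : k ≤ r)
    (hmiss : ∀ (u : V) (c : Fin k) (j : Fin r), ∃ z, part z = j ∧ ¬ MonoConn E χ c u z) (v : V) :
    ∃ u, ∃ S : Finset V, u ∈ S ∧ Set.InjOn part S ∧ ∀ c, ∃ z ∈ S, ¬ MonoConn E χ c u z := by
  rcases hkr.lt_or_eq with hlt | rfl
  · obtain ⟨S, hvS, hS, hsep⟩ := exists_injOn_superset_not_monoConn (hmiss v) univ
      (S := {v}) (by simp) (by simp; omega)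
    exact ⟨v, S, hvS (mem_singleton_self v), hS, fun c => hsep c (mem_univ c)⟩
  · obtain ⟨u, w, c, c', huw, hcc', hc, hc'⟩ :=
      exists_two_colors_not_monoConn hr hmiss v (c₀ := ⟨0, by omega⟩) (c₁ := ⟨1, by omega⟩)
        (by simp [Fin.ext_iff])
    obtain ⟨S, huwS, hS, hsep⟩ := exists_injOn_superset_not_monoConn (hmiss u) (univ \ {c, c'})
      (S := {u, w}) (by simp [Set.InjOn, huw, huw.symm])
      (by rw [card_pair (fun h => huw (congrArg part h)), card_univ_sdiff, card_pair hcc',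
        Fintype.card_fin]; omega)
    refine ⟨u, S, huwS (by simp), hS, fun d => ?_⟩
    by_cases hd : d = c ∨ d = c'
    · exact ⟨w, huwS (by simp), by rcases hd with rfl | rfl <;> assumption⟩
    · exact hsep d (by simpa using hd)

end Components

theorem stmt_1_general {r k : ℕ} (hr : 3 ≤ r) (hkr : k ≤ r)
    (part : V → Fin r) (hne : ∀ i : Fin r, ∃ v, part v = i)
    (χ : Finset V → Fin k) (hs : Spanning (IsPartiteEdge part) χ) :
    ∃ (c : Fin k) (w : V), ∀ v : V, MonoConn (IsPartiteEdge part) χ c w v := by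
  by_contra! hcov
  obtain ⟨v, -⟩ := hne ⟨0, by omega⟩
  obtain ⟨u, S, huS, hS, hsep⟩ :=
    exists_injOn_not_monoConn hr hkr (hs.exists_not_monoConn hcov) v
  obtain ⟨d, hd⟩ := exists_monoConn_of_injOn hne χ hS
  obtain ⟨z, hzS, hz⟩ := hsep d
  exact hz (hd u huS z hzS)

theorem stmt_1 {r k : ℕ} [Fintype V] (hr : 3 ≤ r) (hk1 : 1 ≤ k) (hkr : k ≤ r)
    (part : V → Fin r) (hne : ∀ i : Fin r, ∃ v, part v = i)
    (χ : Finset V → Fin k) (hs : Spanning (IsPartiteEdge part) χ) :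
    ∃ (c : Fin k) (w : V), ∀ v : V, MonoConn (IsPartiteEdge part) χ c w v :=
  stmt_1_general hr hkr part hne χ hs
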